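/- arXiv:1902.04815 — 2 statements merged into one kernel-verified Lean document; each statement's English description precedes it below -/
import Mathlib

section
/- The cosine envelope used in the QC relaxation is valid: for θ ∈ [−θ^max, θ^max] with 0 < θ^max ≤ π/2, cos θ satisfies cos θ ≤ 1 − (1 − cos θ^max)/(θ^max)² · θ² and cos θ ≥ cos θ^max. -/
open Real

lemma one_sub_cos (x : ℝ) : 1 - Real.cos x = 2 * Real.sin (x/2) ^ 2 := by
  have h := Real.cos_two_mul (x/2)
  have h2 := Real.sin_sq_add_cos_sq (x/2)
  have : 2 * (x/2) = x := by ring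
  rw [this] at h
  nlinarith

lemma sin_half_lb (θmax a : ℝ) (h0 : 0 < θmax) (h2 : θmax ≤ Real.pi / 2)
    (ha0 : 0 ≤ a) (ha : a ≤ θmax) :
    (a / θmax) * Real.sin (θmax / 2) ≤ Real.sin (a / 2) := by
  have hc := strictConcaveOn_sin_Icc.concaveOn
  have hπ := Real.pi_pos
  have hmem0 : (0:ℝ) ∈ Set.Icc 0 Real.pi := ⟨le_rfl, hπ.le⟩
  have hmem1 : θmax / 2 ∈ Set.Icc 0 Real.pi := by
    constructor <;> nlinarith
  have ht0 : 0 ≤ a / θmax := div_nonneg ha0 h0.le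
  have ht1 : 0 ≤ 1 - a / θmax := by
    have : a / θmax ≤ 1 := (div_le_one h0).mpr ha
    linarith
  have := hc.2 hmem0 hmem1 ht1 ht0 (by ring)
  simp only [smul_eq_mul, mul_zero, Real.sin_zero, zero_add] at this
  have heq : a / θmax * (θmax / 2) = a / 2 := by field_simp
  simp only [heq] at this
  linarith

theorem cosine_envelope_valid (θmax θ : ℝ) (h0 : 0 < θmax) (h2 : θmax ≤ Real.pi / 2)
    (hl : -θmax ≤ θ) (hu : θ ≤ θmax) :
    Real.cos θ ≤ 1 - (1 - Real.cos θmax) / θmax ^ 2 * θ ^ 2 ∧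
    Real.cos θmax ≤ Real.cos θ := by
  have hπ := Real.pi_pos
  set a := |θ| with ha
  have ha0 : 0 ≤ a := abs_nonneg θ
  have haθ : a ≤ θmax := abs_le.mpr ⟨hl, hu⟩
  have hcos : Real.cos θ = Real.cos a := by
    rcases abs_choice θ with h | h <;> rw [ha, h] <;> simp [Real.cos_neg]
  constructor
  · -- upper envelope
    have hkey := sin_half_lb θmax a h0 h2 ha0 haθ
    have hs0 : 0 ≤ Real.sin (a/2) := by
      apply Real.sin_nonneg_of_nonneg_of_le_pi <;> nlinarith
    have hsq : (a / θmax * Real.sin (θmax / 2)) ^ 2 ≤ Real.sin (a/2) ^ 2 := by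
      apply sq_le_sq' _ hkey
      nlinarith [Real.sin_nonneg_of_nonneg_of_le_pi (x := θmax/2) (by linarith) (by linarith),
        mul_nonneg (div_nonneg ha0 h0.le) (Real.sin_nonneg_of_nonneg_of_le_pi (x := θmax/2) (by linarith) (by linarith))]
    have e1 := one_sub_cos a
    have e2 := one_sub_cos θmax
    have haa : a ^ 2 = θ ^ 2 := sq_abs θ
    rw [hcos]
    have hd : (1 - Real.cos θmax) / θmax ^ 2 * θ ^ 2
        = 2 * (a / θmax * Real.sin (θmax / 2)) ^ 2 := by
      rw [e2, ← haa]; field_simp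
    rw [hd]
    linarith [hsq, e1]
  · -- lower bound
    rw [hcos]
    apply Real.cos_le_cos_of_nonneg_of_le_pi ha0 (by linarith) haθ
end

section
/- The sine envelope used in the QC relaxation is valid: for θ ∈ [−θ^max, θ^max] with 0 < θ^max ≤ π/2, sin θ satisfies cos(θ^max/2)·(θ − θ^max/2) + sin(θ^max/2) ≥ sin θ and cos(θ^max/2)·(θ + θ^max/2) − sin(θ^max/2) ≤ sin θ. -/
open Real

private lemma tan_two_sin_lemma (m : ℝ) (hm0 : 0 ≤ m) (hm : m ≤ π/4) :
    3*m ≤ Real.tan m + 2*Real.sin m := by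
  have hcospos : ∀ x ∈ Set.Icc (0:ℝ) (π/4), 0 < Real.cos x := by
    intro x hx
    apply Real.cos_pos_of_mem_Ioo
    constructor
    · linarith [hx.1, Real.pi_pos]
    · linarith [hx.2, Real.pi_pos]
  have hmono : MonotoneOn (fun x => Real.tan x + 2*Real.sin x - 3*x) (Set.Icc 0 (π/4)) := by
    apply monotoneOn_of_deriv_nonneg (convex_Icc _ _)
    · apply ContinuousOn.sub
      · apply ContinuousOn.add
        · exact Real.continuousOn_tan.mono (fun x hx => (hcospos x hx).ne')
        · exact (continuous_const.mul Real.continuous_sin).continuousOn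
      · exact (continuous_const.mul continuous_id).continuousOn
    · intro x hx
      rw [interior_Icc] at hx
      have hc : Real.cos x ≠ 0 := (hcospos x ⟨le_of_lt hx.1, le_of_lt hx.2⟩).ne'
      have hd : HasDerivAt (fun x => Real.tan x + 2*Real.sin x - 3*x)
          (1 / Real.cos x ^ 2 + 2 * Real.cos x - 3) x := by
        exact (((Real.hasDerivAt_tan hc).add ((Real.hasDerivAt_sin x).const_mul 2)).sub
          ((hasDerivAt_id x).const_mul 3)).congr_deriv (by ring)
      exact hd.differentiableAt.differentiableWithinAt
    · intro x hx
      rw [interior_Icc] at hx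
      have hcx : 0 < Real.cos x := hcospos x ⟨le_of_lt hx.1, le_of_lt hx.2⟩
      have hc : Real.cos x ≠ 0 := hcx.ne'
      have hd : HasDerivAt (fun x => Real.tan x + 2*Real.sin x - 3*x)
          (1 / Real.cos x ^ 2 + 2 * Real.cos x - 3) x := by
        exact (((Real.hasDerivAt_tan hc).add ((Real.hasDerivAt_sin x).const_mul 2)).sub
          ((hasDerivAt_id x).const_mul 3)).congr_deriv (by ring)
      rw [hd.deriv]
      have hc1 : Real.cos x ≤ 1 := Real.cos_le_one x
      have key : 1 + 2*(Real.cos x)^3 - 3*(Real.cos x)^2 ≥ 0 := by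
        nlinarith [sq_nonneg (Real.cos x - 1), hcx.le]
      have : 3 - 2 * Real.cos x ≤ 1 / Real.cos x ^ 2 := by
        rw [le_div_iff₀ (by positivity)]
        nlinarith
      linarith
  have h0m : (0:ℝ) ∈ Set.Icc (0:ℝ) (π/4) := ⟨le_refl 0, by linarith [Real.pi_pos]⟩
  have hmm : m ∈ Set.Icc (0:ℝ) (π/4) := ⟨hm0, hm⟩
  have := hmono h0m hmm hm0
  simp [Real.tan_zero] at this
  linarith

private lemma env_upper (m θ : ℝ) (hm0 : 0 < m) (hm : m ≤ π/4)
    (h1 : -(2*m) ≤ θ) (h2 : θ ≤ 2*m) :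
    Real.sin θ ≤ Real.cos m * (θ - m) + Real.sin m := by
  set g : ℝ → ℝ := fun x => Real.cos m * (x - m) + Real.sin m - Real.sin x with hg
  suffices h : 0 ≤ g θ by simp only [hg] at h; linarith
  have hderiv : ∀ x : ℝ, HasDerivAt g (Real.cos m - Real.cos x) x := by
    intro x
    exact (((((hasDerivAt_id x).sub_const m).const_mul (Real.cos m)).add_const
      (Real.sin m)).sub (Real.hasDerivAt_sin x)).congr_deriv (by ring)
  have hgm : g m = 0 := by simp [hg]
  have hgcont : Continuous g := by
    have : Differentiable ℝ g := fun x => (hderiv x).differentiableAt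
    exact this.continuous
  have hpi : (0:ℝ) < π := Real.pi_pos
  -- key comparisons of cosines
  have hcos_le : ∀ x : ℝ, m ≤ |x| → |x| ≤ 2*m → Real.cos x ≤ Real.cos m := by
    intro x hx1 hx2
    rw [← Real.cos_abs x]
    exact Real.cos_le_cos_of_nonneg_of_le_pi hm0.le (by linarith) hx1
  have hcos_ge : ∀ x : ℝ, |x| ≤ m → Real.cos m ≤ Real.cos x := by
    intro x hx
    rw [← Real.cos_abs x]
    exact Real.cos_le_cos_of_nonneg_of_le_pi (abs_nonneg x) (by linarith) hx
  rcases le_or_gt m θ with hcase | hcase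
  · -- θ ∈ [m, 2m] : g monotone, g θ ≥ g m = 0
    have hmono : MonotoneOn g (Set.Icc m (2*m)) := by
      apply monotoneOn_of_deriv_nonneg (convex_Icc _ _) hgcont.continuousOn
      · intro x _; exact (hderiv x).differentiableAt.differentiableWithinAt
      · intro x hx
        rw [interior_Icc] at hx
        rw [(hderiv x).deriv]
        obtain ⟨hxa, hxb⟩ := hx
        have : Real.cos x ≤ Real.cos m := by
          apply hcos_le x
          · rw [abs_of_nonneg (by linarith)]; exact hxa.le
          · rw [abs_of_nonneg (by linarith)]; exact hxb.le
        linarith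
    have := hmono ⟨le_refl m, by linarith⟩ ⟨hcase, h2⟩ hcase
    rw [hgm] at this; exact this
  · rcases le_or_gt (-m) θ with hcase2 | hcase2
    · -- θ ∈ [-m, m] : g antitone, g θ ≥ g m = 0
      have hanti : AntitoneOn g (Set.Icc (-m) m) := by
        apply antitoneOn_of_deriv_nonpos (convex_Icc _ _) hgcont.continuousOn
        · intro x _; exact (hderiv x).differentiableAt.differentiableWithinAt
        · intro x hx
          rw [interior_Icc] at hx
          rw [(hderiv x).deriv]
          have : Real.cos m ≤ Real.cos x :=
            hcos_ge x (abs_le.mpr ⟨hx.1.le, hx.2.le⟩)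
          linarith
      have := hanti ⟨hcase2, hcase.le⟩ ⟨by linarith, le_refl m⟩ hcase.le
      rw [hgm] at this; exact this
    · -- θ ∈ [-2m, -m] : g monotone, g θ ≥ g (-2m) ≥ 0
      have hmono : MonotoneOn g (Set.Icc (-(2*m)) (-m)) := by
        apply monotoneOn_of_deriv_nonneg (convex_Icc _ _) hgcont.continuousOn
        · intro x _; exact (hderiv x).differentiableAt.differentiableWithinAt
        · intro x hx
          rw [interior_Icc] at hx
          rw [(hderiv x).deriv]
          obtain ⟨hxa, hxb⟩ := hx
          have : Real.cos x ≤ Real.cos m := by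
            apply hcos_le x
            · rw [abs_of_nonpos (by linarith)]; linarith
            · rw [abs_of_nonpos (by linarith)]; linarith
          linarith
      have hstep := hmono ⟨le_refl _, by linarith⟩ ⟨h1, hcase2.le⟩ h1
      have hend : 0 ≤ g (-(2*m)) := by
        have htl := tan_two_sin_lemma m hm0.le hm
        have hcpos : 0 < Real.cos m := by
          apply Real.cos_pos_of_mem_Ioo
          constructor <;> [linarith; linarith]
        have htan : Real.tan m = Real.sin m / Real.cos m := Real.tan_eq_sin_div_cos m
        have hkey : 3*m*Real.cos m ≤ Real.sin m + 2*Real.sin m*Real.cos m := by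
          have := mul_le_mul_of_nonneg_right htl hcpos.le
          rw [htan] at this
          field_simp at this
          nlinarith [this]
        have hsin2 : Real.sin (-(2*m)) = -(2 * Real.sin m * Real.cos m) := by
          rw [Real.sin_neg, Real.sin_two_mul]
        simp only [hg, hsin2]
        nlinarith [hkey]
      linarith
  
theorem sine_envelope_valid (θmax θ : ℝ) (h0 : 0 < θmax) (h2 : θmax ≤ Real.pi / 2)
    (hl : -θmax ≤ θ) (hu : θ ≤ θmax) :
    Real.sin θ ≤ Real.cos (θmax / 2) * (θ - θmax / 2) + Real.sin (θmax / 2) ∧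
    Real.cos (θmax / 2) * (θ + θmax / 2) - Real.sin (θmax / 2) ≤ Real.sin θ := by
  set m := θmax / 2 with hm
  have hm0 : 0 < m := by positivity
  have hmle : m ≤ π/4 := by rw [hm]; linarith
  have hθ1 : -(2*m) ≤ θ := by rw [hm]; linarith
  have hθ2 : θ ≤ 2*m := by rw [hm]; linarith
  constructor
  · exact env_upper m θ hm0 hmle hθ1 hθ2
  · have := env_upper m (-θ) hm0 hmle (by linarith) (by linarith)
    rw [Real.sin_neg] at this
    linarith
end
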